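/- For an integer M ≥ 3, let μ_M be the uniform distribution on the M vertices r_j = (cos(2π(j−1)/M), sin(2π(j−1)/M), 0), j = 1,…,M, of a regular M-gon inscribed in the equator of the unit sphere S² of ℝ³. Then g*(μ_M) = 2/(M·sin(π/M)) if M is even, and g*(μ_M) = 1/(M·sin(π/(2M))) if M is odd. -/

import Mathlib

/-!
Write the horizontal part of a unit vector `v` in polar form `ρ (cos α, sin α)` with `ρ ≤ 1`.
Then `⟨r_j, v⟩ = ρ cos (θ_j - α)`, so `g*` is `1/M` times the maximum over `α` of
`∑ j, |cos (θ_j - α)|`, attained at `v = (cos α, sin α, 0)`. As `|cos|` has period `π`, the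
angles `θ_j = 2πj/M` only matter modulo `π`: for `M = 2n` they give each `kπ/n` (`k < n`) twice,
and for odd `M` each `kπ/M` once, because `j ↦ 2j mod M` permutes `range M`. The sum
`S_n(α) = ∑_{k<n} |cos (kπ/n - α)|` is `π/n`-periodic, and on the window of length `π/n` centred
at `α₀ = π/2 - π/(2n)` all its cosines are nonnegative, so it telescopes to
`cos (α - α₀) / sin (π/(2n))`, whose maximum is `1 / sin (π/(2n))`.
-/

open MeasureTheory Real
open scoped ENNReal

noncomputable section

abbrev E3 := EuclideanSpace ℝ (Fin 3)

/-- The unit sphere S² in ℝ³. -/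
def unitSphere : Set E3 := Metric.sphere (0 : E3) 1

/-- `g C μ` is the supremum over unit vectors `v` of `∫ √(C² + (1−C²)⟨r,v⟩²) dμ(r)`. -/
def g (C : ℝ) (μ : Measure E3) : ℝ :=
  ⨆ v : unitSphere, ∫ r, Real.sqrt (C ^ 2 + (1 - C ^ 2) * (inner ℝ r (v : E3) : ℝ) ^ 2) ∂μ


/-- `gstar μ` is the supremum over unit vectors `v` of `∫ |⟨r,v⟩| dμ(r)`. -/
def gstar (μ : Measure E3) : ℝ :=
  ⨆ v : unitSphere, ∫ r, |(inner ℝ r (v : E3) : ℝ)| ∂μ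


/-- The point `(cos φ, sin φ, 0)` on the equator of the unit sphere. -/
def eqPt (φ : ℝ) : E3 := (WithLp.equiv 2 (Fin 3 → ℝ)).symm ![Real.cos φ, Real.sin φ, 0]

/-- The uniform probability measure on the equator: the pushforward of the normalized
Lebesgue measure on `[0, 2π)` under `φ ↦ (cos φ, sin φ, 0)`. -/
def equatorUniform : Measure E3 :=
  Measure.map eqPt ((ENNReal.ofReal (2 * π))⁻¹ • volume.restrict (Set.Ico 0 (2 * π)))

open Finset

theorem sin_pi_div_two_mul_pos {n : ℕ} (hn : n ≠ 0) : 0 < sin (π / (2 * n)) := by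
  apply sin_pos_of_pos_of_lt_pi (by positivity)
  rw [div_lt_iff₀ (by positivity)]
  nlinarith [pi_pos, (by exact_mod_cast Nat.one_le_iff_ne_zero.mpr hn : (1 : ℝ) ≤ n)]

def sumAbsCos (n : ℕ) (α : ℝ) : ℝ := ∑ k ∈ range n, |cos (k * π / n - α)|

theorem sumAbsCos_periodic {n : ℕ} (hn : n ≠ 0) : Function.Periodic (sumAbsCos n) (π / n) := by
  intro α
  obtain ⟨m, rfl⟩ := Nat.exists_eq_succ_of_ne_zero hn
  rw [sumAbsCos, sumAbsCos, sum_range_succ', sum_range_succ _ m]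
  congr 1
  · refine sum_congr rfl fun k _ => ?_
    congr 2
    field_simp
    push_cast
    ring
  · rw [← abs_neg, ← cos_add_pi]
    congr 2
    field_simp
    push_cast
    ring

theorem sumAbsCos_eq_of_abs_sub_le {n : ℕ} (hn : n ≠ 0) {α : ℝ}
    (hα : |α - (π / 2 - π / (2 * n))| ≤ π / (2 * n)) :
    sumAbsCos n α = cos (α - (π / 2 - π / (2 * n))) / sin (π / (2 * n)) := by
  rw [eq_div_iff (sin_pi_div_two_mul_pos hn).ne', sumAbsCos]
  have hterm : ∀ k ∈ range n, |cos (k * π / n - α)| = cos (π / n * k + -α) := by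
    intro k hk
    have hk : (k : ℝ) + 1 ≤ n := by exact_mod_cast mem_range.mp hk
    rw [abs_of_nonneg]
    · ring_nf
    apply cos_nonneg_of_mem_Icc
    rw [abs_le] at hα
    have h1 : k * π / n = π / n * k := by ring
    have h2 : π / n * k ≤ π / n * (n - 1) := by gcongr; linarith
    have h3 : π / n * (n - 1) = π - 2 * (π / (2 * n)) := by field_simp
    have h4 : 0 ≤ π / n * k := by positivity
    constructor <;> linarith
  rw [sum_congr rfl hterm, mul_comm, show π / (2 * n) = π / n / 2 by ring, sin_mul_sum_cos,
    show n * (π / n) / 2 = π / 2 by field_simp, sin_pi_div_two, one_mul, ← cos_neg]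
  congr 1
  field_simp
  ring

theorem isGreatest_range_sumAbsCos {n : ℕ} (hn : n ≠ 0) :
    IsGreatest (Set.range (sumAbsCos n)) (1 / sin (π / (2 * n))) := by
  set δ := π / (2 * n)
  refine ⟨⟨π / 2 - δ, ?_⟩, ?_⟩
  · rw [sumAbsCos_eq_of_abs_sub_le hn (by rw [sub_self, abs_zero]; positivity), sub_self,
      cos_zero]
  · rintro _ ⟨α, rfl⟩
    obtain ⟨β, hβ, hαβ⟩ :=
      (sumAbsCos_periodic hn).exists_mem_Ico (by positivity) α (π / 2 - δ - δ)
    have hβ' : |β - (π / 2 - δ)| ≤ δ := by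
      rw [abs_le]
      have : π / n = 2 * δ := by ring
      constructor <;> linarith [hβ.1, hβ.2]
    rw [hαβ, sumAbsCos_eq_of_abs_sub_le hn hβ']
    gcongr
    · exact (sin_pi_div_two_mul_pos hn).le
    · exact cos_le_one _

theorem periodic_abs_cos_nat_mul_pi_div {n : ℕ} (hn : n ≠ 0) (α : ℝ) :
    Function.Periodic (fun k : ℕ => |cos (k * π / n - α)|) n := by
  intro k
  dsimp only
  conv_rhs => rw [← abs_neg, ← cos_add_pi]
  congr 2
  field_simp
  push_cast
  ring

theorem sum_range_two_mul_mod_of_odd {β : Type*} [AddCommMonoid β] {M : ℕ} (hM : Odd M)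
    (f : ℕ → β) : ∑ j ∈ range M, f (2 * j % M) = ∑ k ∈ range M, f k := by
  obtain ⟨m, rfl⟩ := hM
  have hmod : ∀ x < 2 * (2 * m + 1),
      x % (2 * m + 1) = if x < 2 * m + 1 then x else x - (2 * m + 1) := by
    intro x hx
    split_ifs with h
    · exact Nat.mod_eq_of_lt h
    · rw [Nat.mod_eq_sub_mod (by omega), Nat.mod_eq_of_lt (by omega)]
  refine sum_nbij' (fun j => 2 * j % (2 * m + 1))
    (fun k => if k % 2 = 0 then k / 2 else (k + 2 * m + 1) / 2) ?_ ?_ ?_ ?_ (fun _ _ => rfl) <;>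
    intro k hk <;> simp only [mem_range] at hk ⊢
  all_goals (try rw [hmod]) <;> (try split_ifs) <;> omega

theorem sum_abs_cos_two_pi_div_add_self (n : ℕ) (α : ℝ) :
    ∑ j ∈ range (n + n), |cos (2 * π * j / ↑(n + n) - α)| = 2 * sumAbsCos n α := by
  rcases eq_or_ne n 0 with rfl | hn
  · simp [sumAbsCos]
  have hterm : ∀ j : ℕ, |cos (2 * π * j / ↑(n + n) - α)| = |cos (j * π / n - α)| := by
    intro j
    congr 3
    push_cast
    field_simp
    ring
  simp only [hterm, sum_range_add, add_comm n, (periodic_abs_cos_nat_mul_pi_div hn α) _]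
  rw [sumAbsCos]
  ring

theorem sum_abs_cos_two_pi_div_of_odd {M : ℕ} (hM : Odd M) (α : ℝ) :
    ∑ j ∈ range M, |cos (2 * π * j / M - α)| = sumAbsCos M α := by
  have h := periodic_abs_cos_nat_mul_pi_div (Nat.pos_of_ne_zero hM.pos.ne').ne' α
  rw [sumAbsCos, ← sum_range_two_mul_mod_of_odd hM (fun k => |cos (k * π / M - α)|)]
  refine sum_congr rfl fun j _ => ?_
  rw [h.map_mod_nat]
  push_cast
  ring_nf

theorem isGreatest_range_sum_abs_cos_two_pi_div {M : ℕ} (hM : M ≠ 0) :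
    IsGreatest (Set.range fun α => ∑ j ∈ range M, |cos (2 * π * j / M - α)|)
      (if Even M then 2 / sin (π / M) else 1 / sin (π / (2 * M))) := by
  split_ifs with h
  · obtain ⟨n, rfl⟩ := h
    have hmono : Monotone fun x : ℝ => 2 * x := fun _ _ h => by linarith
    rw [show 2 / sin (π / ↑(n + n)) = 2 * (1 / sin (π / (2 * n))) by push_cast; ring_nf]
    simpa only [sum_abs_cos_two_pi_div_add_self, ← Set.range_comp, Function.comp_def]
      using hmono.map_isGreatest (isGreatest_range_sumAbsCos (by omega))
  · simpa only [sum_abs_cos_two_pi_div_of_odd (Nat.not_even_iff_odd.mp h)]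
      using isGreatest_range_sumAbsCos hM

theorem inner_eqPt (φ : ℝ) (v : E3) : inner ℝ (eqPt φ) v = cos φ * v 0 + sin φ * v 1 := by
  simp [eqPt, PiLp.inner_apply, Fin.sum_univ_three, mul_comm]

theorem norm_eqPt (φ : ℝ) : ‖eqPt φ‖ = 1 := by
  simp [eqPt, EuclideanSpace.norm_eq, Fin.sum_univ_three]

theorem inner_eqPt_eqPt (θ φ : ℝ) : inner ℝ (eqPt θ) (eqPt φ) = cos (θ - φ) := by
  rw [inner_eqPt, cos_sub]
  simp [eqPt]

theorem exists_inner_eqPt_eq_mul_cos (v : E3) :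
    ∃ ρ α : ℝ, 0 ≤ ρ ∧ ρ ≤ ‖v‖ ∧ ∀ θ, inner ℝ (eqPt θ) v = ρ * cos (θ - α) := by
  set z : ℂ := ⟨v 0, v 1⟩
  have hcos : ∀ θ, inner ℝ (eqPt θ) v = ‖z‖ * cos (θ - z.arg) := by
    intro θ
    have hre : ‖z‖ * cos z.arg = v 0 := Complex.norm_mul_cos_arg z
    have him : ‖z‖ * sin z.arg = v 1 := Complex.norm_mul_sin_arg z
    rw [inner_eqPt, cos_sub, ← hre, ← him]
    ring
  refine ⟨‖z‖, z.arg, norm_nonneg z, ?_, hcos⟩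
  calc ‖z‖ = inner ℝ (eqPt z.arg) v := by rw [hcos, sub_self, cos_zero, mul_one]
    _ ≤ ‖eqPt z.arg‖ * ‖v‖ := real_inner_le_norm _ _
    _ = ‖v‖ := by rw [norm_eqPt, one_mul]

theorem integral_smul_sum_dirac {α E ι : Type*} [MeasurableSpace α]
    [MeasurableSingletonClass α] [NormedAddCommGroup E] [NormedSpace ℝ E] [CompleteSpace E]
    [Fintype ι] (c : ℝ≥0∞) (x : ι → α) (f : α → E) :
    ∫ r, f r ∂(c • ∑ i, Measure.dirac (x i)) = c.toReal • ∑ i, f (x i) := by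
  rw [integral_smul_measure, integral_finsetSum_measure
    fun i _ => integrable_dirac enorm_lt_top]
  simp only [integral_dirac]

theorem gstar_smul_sum_dirac_eqPt {ι : Type*} [Fintype ι] (c : ℝ≥0∞) (θ : ι → ℝ) {B : ℝ}
    (hB : IsGreatest (Set.range fun α => ∑ i, |cos (θ i - α)|) B) :
    gstar (c • ∑ i, Measure.dirac (eqPt (θ i))) = c.toReal * B := by
  obtain ⟨⟨α₀, hα₀⟩, hB_le⟩ := hB
  suffices IsGreatest
      (Set.range fun v : unitSphere => c.toReal * ∑ i, |inner ℝ (eqPt (θ i)) v|) (c.toReal * B) by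
    simp only [gstar, integral_smul_sum_dirac, smul_eq_mul]
    exact this.csSup_eq
  have hα₀_mem : eqPt α₀ ∈ unitSphere := by simp [unitSphere, norm_eqPt]
  refine ⟨⟨⟨eqPt α₀, hα₀_mem⟩, by simp only [inner_eqPt_eqPt, hα₀]⟩, ?_⟩
  rintro _ ⟨⟨v, hv⟩, rfl⟩
  obtain ⟨ρ, α, hρ0, hρv, hρ⟩ := exists_inner_eqPt_eq_mul_cos v
  have hρ1 : ρ ≤ 1 := hρv.trans (by simpa [unitSphere] using hv.le)
  refine mul_le_mul_of_nonneg_left ?_ ENNReal.toReal_nonneg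
  calc ∑ i, |inner ℝ (eqPt (θ i)) v| = ρ * ∑ i, |cos (θ i - α)| := by
        simp only [hρ, abs_mul, abs_of_nonneg hρ0, mul_sum]
    _ ≤ 1 * B := mul_le_mul hρ1 (hB_le ⟨α, rfl⟩) (by positivity) zero_le_one
    _ = B := one_mul B

/-- For an integer `M ≥ 3`, let `μ_M` be the uniform distribution on the `M` vertices
`(cos(2πj/M), sin(2πj/M), 0)`, `j = 0, …, M−1`, of a regular `M`-gon inscribed in the equator
of the unit sphere S² of ℝ³.  Then `g*(μ_M) = 2/(M·sin(π/M))` when `M` is even and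
`g*(μ_M) = 1/(M·sin(π/(2M)))` when `M` is odd. -/
theorem gstar_polygon (M : ℕ) (hM : 3 ≤ M) :
    gstar ((M : ℝ≥0∞)⁻¹ • ∑ j : Fin M, Measure.dirac (eqPt (2 * π * (j : ℕ) / M)))
      = if Even M then 2 / (M * Real.sin (π / M)) else 1 / (M * Real.sin (π / (2 * M))) := by
  have hB := isGreatest_range_sum_abs_cos_two_pi_div (M := M) (by omega)
  simp only [sum_range] at hB
  rw [gstar_smul_sum_dirac_eqPt _ _ hB, ENNReal.toReal_inv, ENNReal.toReal_natCast]
  split_ifs <;> ring
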